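/- arXiv:1606.01382 — 3 statements merged into one kernel-verified Lean document; each statement's English description precedes it below -/
import Mathlib

section
/- (Theorem 2) Let σ > 0, let p be an even positive integer, let ε > 0, let k be an even nonnegative integer, and let N be a nonnegative integer. Then |∫_ℝ p_G(x) x^k exp(−ε x^p) dx − Σ_{n=0}^{N} ((−ε)^n / n!) · (np+k−1)!! · σ^{np+k}| ≤ (ε^{N+1} / (N+1)!) · ((N+1)p + k − 1)!! · σ^{(N+1)p + k}, where j!! denotes the double factorial j(j−2)(j−4)···1 (with (−1)!! = 1). -/
open MeasureTheory Real

/-- The centered Gaussian density with standard deviation `σ`. -/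
noncomputable def pG (σ x : ℝ) : ℝ :=
  (1 / (Real.sqrt (2 * Real.pi) * σ)) * Real.exp (-x ^ 2 / (2 * σ ^ 2))

/-!
Taylor's theorem with the Lagrange remainder gives, for `y ≤ 0`,
`|exp y - ∑_{n ≤ N} yⁿ / n!| ≤ |y|^(N+1) / (N+1)!`, because `exp ≤ 1` on `(-∞, 0]`.
Apply this to `y = -ε xᵖ ≤ 0` and integrate against the nonnegative weight `p_G(x) xᵏ`:
the Taylor polynomial integrates term by term to Gaussian moments, and the remainder is bounded
by a moment as well. The even moments `(m - 1)‼ σᵐ` follow from Stein's identity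
`∫ p_G(x) x^(j+2) dx = (j + 1) σ² ∫ p_G(x) xʲ dx`, which is integration by parts with
`p_G'(x) = -(x / σ²) p_G(x)`.
-/

open Finset Nat

theorem abs_exp_sub_sum_le_of_nonpos {x : ℝ} (hx : x ≤ 0) (N : ℕ) :
    |exp x - ∑ n ∈ range (N + 1), x ^ n / n !| ≤ |x| ^ (N + 1) / (N + 1)! := by
  rcases hx.eq_or_lt with rfl | hx
  · simp [sum_range_succ']
  obtain ⟨ξ, hξ, hrem⟩ := taylor_mean_remainder_lagrange_iteratedDeriv (f := exp) (x₀ := 0) hx.ne'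
    contDiff_exp.contDiffOn
  have htaylor : taylorWithinEval exp N (Set.uIcc 0 x) 0 x = ∑ n ∈ range (N + 1), x ^ n / n ! := by
    rw [taylor_within_apply]
    refine sum_congr rfl fun n _ => ?_
    rw [iteratedDerivWithin_eq_iteratedDeriv (uniqueDiffOn_uIcc hx.ne') contDiff_exp.contDiffAt
      Set.left_mem_uIcc, iteratedDeriv_eq_iterate, iter_deriv_exp]
    simp [div_eq_inv_mul]
  have hξ_neg : ξ < 0 := hξ.2.trans_eq (max_eq_left hx.le)
  rw [← htaylor, hrem, iteratedDeriv_eq_iterate, iter_deriv_exp, sub_zero, abs_div, abs_mul,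
    abs_pow, abs_of_pos (exp_pos ξ), Nat.abs_cast]
  gcongr
  exact mul_le_of_le_one_left (by positivity) (exp_le_one_iff.mpr hξ_neg.le)

theorem pG_eq (σ x : ℝ) : pG σ x = 1 / (√(2 * π) * σ) * exp (-(2 * σ ^ 2)⁻¹ * x ^ 2) := by
  rw [pG]; congr 2; ring

theorem pG_nonneg {σ : ℝ} (hσ : 0 ≤ σ) (x : ℝ) : 0 ≤ pG σ x := by
  unfold pG; positivity

theorem hasDerivAt_pG (σ x : ℝ) : HasDerivAt (pG σ) (-(x / σ ^ 2) * pG σ x) x := by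
  have hq : HasDerivAt (fun y : ℝ => -(2 * σ ^ 2)⁻¹ * y ^ 2) (-(x / σ ^ 2)) x :=
    ((hasDerivAt_pow 2 x).const_mul _).congr_deriv (by norm_num; ring)
  rw [show pG σ = _ from funext (pG_eq σ)]
  exact (hq.exp.const_mul _).congr_deriv (by ring)

theorem integrable_pG_mul_pow {σ : ℝ} (hσ : σ ≠ 0) (j : ℕ) :
    Integrable fun x => pG σ x * x ^ j := by
  have h := (integrable_rpow_mul_exp_neg_mul_sq (b := (2 * σ ^ 2)⁻¹) (by positivity)
    (s := j) (neg_one_lt_zero.trans_le j.cast_nonneg)).const_mul (1 / (√(2 * π) * σ))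
  refine h.congr (.of_forall fun x => ?_)
  simp only [pG_eq, rpow_natCast]
  ring

theorem integral_pG {σ : ℝ} (hσ : 0 < σ) : ∫ x, pG σ x = 1 := by
  have hsq : π / (2 * σ ^ 2)⁻¹ = (√(2 * π) * σ) ^ 2 := by
    rw [mul_pow, sq_sqrt (by positivity)]; field_simp
  have hπ : 0 < √(2 * π) := by positivity
  simp only [pG_eq, integral_const_mul, integral_gaussian, hsq,
    sqrt_sq (by positivity : 0 ≤ √(2 * π) * σ)]
  field_simp

theorem integral_pG_mul_pow_add_two {σ : ℝ} (hσ : σ ≠ 0) (j : ℕ) :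
    ∫ x, pG σ x * x ^ (j + 2) = (j + 1) * σ ^ 2 * ∫ x, pG σ x * x ^ j := by
  have hv : ∀ x, HasDerivAt (fun y => -σ ^ 2 * pG σ y) (x * pG σ x) x := fun x =>
    ((hasDerivAt_pG σ x).const_mul _).congr_deriv (by field_simp)
  have hu : ∀ x : ℝ, HasDerivAt (fun y => y ^ (j + 1)) ((j + 1 : ℕ) * x ^ j) x := fun x => by
    simpa using hasDerivAt_pow (j + 1) x
  have hparts := integral_mul_deriv_eq_deriv_mul_of_integrable (fun x _ => hu x) (fun x _ => hv x)
    ((integrable_pG_mul_pow hσ (j + 2)).congr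
      (.of_forall fun x => by simp only [Pi.mul_apply]; ring))
    (((integrable_pG_mul_pow hσ j).const_mul ((j + 1 : ℕ) * -σ ^ 2)).congr
      (.of_forall fun x => by simp only [Pi.mul_apply]; ring))
    (((integrable_pG_mul_pow hσ (j + 1)).const_mul (-σ ^ 2)).congr
      (.of_forall fun x => by simp only [Pi.mul_apply]; ring))
  rw [← integral_neg] at hparts
  rw [← integral_const_mul]
  convert hparts using 1 <;> congr 1 <;> ext x <;> push_cast <;> ring

theorem integral_pG_mul_pow_two_mul {σ : ℝ} (hσ : 0 < σ) (r : ℕ) :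
    ∫ x, pG σ x * x ^ (2 * r) = (2 * r - 1)‼ * σ ^ (2 * r) := by
  induction r with
  | zero => simpa using integral_pG hσ
  | succ r ih =>
    rw [mul_add_one, integral_pG_mul_pow_add_two hσ.ne', ih,
      show 2 * r + 2 - 1 = 2 * r + 1 by omega, doubleFactorial_add_one]
    push_cast
    ring

theorem integral_pG_mul_pow_of_even {σ : ℝ} (hσ : 0 < σ) {m : ℕ} (hm : Even m) :
    ∫ x, pG σ x * x ^ m = (m - 1)‼ * σ ^ m := by
  obtain ⟨r, rfl⟩ := hm
  rw [← two_mul]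
  exact integral_pG_mul_pow_two_mul hσ r

theorem integrable_pG_mul_pow_mul_exp {σ ε : ℝ} (hσ : σ ≠ 0) (hε : 0 ≤ ε) {p : ℕ} (hp : Even p)
    (k : ℕ) : Integrable fun x => pG σ x * x ^ k * exp (-ε * x ^ p) := by
  refine (integrable_pG_mul_pow hσ k).norm.mono' (by unfold pG; fun_prop) (.of_forall fun x => ?_)
  rw [norm_mul, Real.norm_of_nonneg (exp_pos _).le]
  refine mul_le_of_le_one_right (norm_nonneg (pG σ x * x ^ k)) (exp_le_one_iff.2 ?_)
  exact mul_nonpos_of_nonpos_of_nonneg (neg_nonpos.2 hε) (hp.pow_nonneg x)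

theorem abs_pG_mul_pow_mul_exp_sub_sum_le {σ ε : ℝ} (hσ : 0 ≤ σ) (hε : 0 ≤ ε) {p k : ℕ}
    (hp : Even p) (hk : Even k) (N : ℕ) (x : ℝ) :
    |pG σ x * x ^ k * exp (-ε * x ^ p) -
        ∑ n ∈ range (N + 1), (-ε) ^ n / n ! * (pG σ x * x ^ (n * p + k))| ≤
      ε ^ (N + 1) / (N + 1)! * (pG σ x * x ^ ((N + 1) * p + k)) := by
  have hweight : 0 ≤ pG σ x * x ^ k := mul_nonneg (pG_nonneg hσ x) (hk.pow_nonneg x)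
  have hexponent : -ε * x ^ p ≤ 0 :=
    mul_nonpos_of_nonpos_of_nonneg (neg_nonpos.2 hε) (hp.pow_nonneg x)
  have hterm (n : ℕ) :
      pG σ x * x ^ k * ((-ε * x ^ p) ^ n / n !) = (-ε) ^ n / n ! * (pG σ x * x ^ (n * p + k)) := by
    rw [mul_pow, pow_add, pow_mul']; ring
  calc
    _ = |pG σ x * x ^ k * (exp (-ε * x ^ p) - ∑ n ∈ range (N + 1), (-ε * x ^ p) ^ n / n !)| := by
      simp_rw [mul_sub, mul_sum, hterm]
    _ = pG σ x * x ^ k * |exp (-ε * x ^ p) - ∑ n ∈ range (N + 1), (-ε * x ^ p) ^ n / n !| := by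
      rw [abs_mul, abs_of_nonneg hweight]
    _ ≤ pG σ x * x ^ k * (|-ε * x ^ p| ^ (N + 1) / (N + 1)!) := by
      gcongr
      exact abs_exp_sub_sum_le_of_nonpos hexponent N
    _ = ε ^ (N + 1) / (N + 1)! * (pG σ x * x ^ ((N + 1) * p + k)) := by
      rw [abs_of_nonpos hexponent, neg_mul, neg_neg, mul_pow, ← pow_mul', pow_add x]; ring

theorem stmt2_general (σ : ℝ) (hσ : 0 < σ) (p : ℕ) (hpe : Even p)
    (ε : ℝ) (hε : 0 < ε) (k : ℕ) (hk : Even k) (N : ℕ) :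
    |(∫ x : ℝ, pG σ x * x ^ k * Real.exp (-ε * x ^ p)) -
        ∑ n ∈ Finset.range (N + 1),
          (-ε) ^ n / (n.factorial : ℝ) *
            (Nat.doubleFactorial (n * p + k - 1) : ℝ) * σ ^ (n * p + k)| ≤
      ε ^ (N + 1) / ((N + 1).factorial : ℝ) *
        (Nat.doubleFactorial ((N + 1) * p + k - 1) : ℝ) * σ ^ ((N + 1) * p + k) := by
  have hmoment (n : ℕ) : ∫ x, pG σ x * x ^ (n * p + k) = (n * p + k - 1)‼ * σ ^ (n * p + k) :=
    integral_pG_mul_pow_of_even hσ ((hpe.mul_left n).add hk)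
  have hterm_int (n : ℕ) : Integrable fun x => (-ε) ^ n / n ! * (pG σ x * x ^ (n * p + k)) :=
    (integrable_pG_mul_pow hσ.ne' _).const_mul _
  calc
    _ = ‖∫ x, (pG σ x * x ^ k * exp (-ε * x ^ p) -
          ∑ n ∈ range (N + 1), (-ε) ^ n / n ! * (pG σ x * x ^ (n * p + k)))‖ := by
      rw [Real.norm_eq_abs, integral_sub (integrable_pG_mul_pow_mul_exp hσ.ne' hε.le hpe k)
        (integrable_finsetSum _ fun n _ => hterm_int n),
        integral_finsetSum _ fun n _ => hterm_int n]
      simp_rw [integral_const_mul, hmoment, mul_assoc]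
    _ ≤ ∫ x, ε ^ (N + 1) / (N + 1)! * (pG σ x * x ^ ((N + 1) * p + k)) :=
      norm_integral_le_of_norm_le ((integrable_pG_mul_pow hσ.ne' _).const_mul _)
        (.of_forall (abs_pG_mul_pow_mul_exp_sub_sum_le hσ.le hε.le hpe hk N))
    _ = _ := by rw [integral_const_mul, hmoment, mul_assoc]

theorem stmt2 (σ : ℝ) (hσ : 0 < σ) (p : ℕ) (hp : 0 < p) (hpe : Even p)
    (ε : ℝ) (hε : 0 < ε) (k : ℕ) (hk : Even k) (N : ℕ) :
    |(∫ x : ℝ, pG σ x * x ^ k * Real.exp (-ε * x ^ p)) -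
        ∑ n ∈ Finset.range (N + 1),
          (-ε) ^ n / (n.factorial : ℝ) *
            (Nat.doubleFactorial (n * p + k - 1) : ℝ) * σ ^ (n * p + k)| ≤
      ε ^ (N + 1) / ((N + 1).factorial : ℝ) *
        (Nat.doubleFactorial ((N + 1) * p + k - 1) : ℝ) * σ ^ ((N + 1) * p + k) :=
  stmt2_general σ hσ p hpe ε hε k hk N
end

section
/- (First-order entropy decrease) Let σ > 0, let p be an even integer with p ≥ 2, and let ε > 0 satisfy ε (p−1)!! σ^p < 1. Then the first-order entropy approximation H₁ = log(√(2π) σ (1 − ε σ^p (p−1)!!)) + (1 − ε σ^p (p−1)!!)^{−1} · (1/2 + ε σ^p ((p−1)!! − (1/2)(p+1)!!)) is strictly less than the Gaussian entropy log(√(2π) σ) + 1/2. That is, to first order, specification of a higher-order even moment decreases the entropy below that of the corresponding Gaussian. -/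
open Real

theorem stmt10 (σ : ℝ) (hσ : 0 < σ) (p : ℕ) (hp : 2 ≤ p) (hpe : Even p)
    (ε : ℝ) (hε : 0 < ε)
    (hsmall : ε * (Nat.doubleFactorial (p - 1) : ℝ) * σ ^ p < 1)
    (H₁ : ℝ) (hH₁ : H₁ =
      Real.log (Real.sqrt (2 * Real.pi) * σ *
          (1 - ε * σ ^ p * (Nat.doubleFactorial (p - 1) : ℝ))) +
        (1 - ε * σ ^ p * (Nat.doubleFactorial (p - 1) : ℝ))⁻¹ *
          (1 / 2 + ε * σ ^ p * ((Nat.doubleFactorial (p - 1) : ℝ) -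
            (1 / 2) * (Nat.doubleFactorial (p + 1) : ℝ)))) :
    H₁ < Real.log (Real.sqrt (2 * Real.pi) * σ) + 1 / 2 := by
  set D : ℝ := (Nat.doubleFactorial (p - 1) : ℝ) with hDdef
  have hD : 0 < D := by
    rw [hDdef]
    exact_mod_cast Nat.doubleFactorial_pos (p - 1)
  have hp1 : p - 1 + 2 = p + 1 := by omega
  have hDp1 : (Nat.doubleFactorial (p + 1) : ℝ) = ((p : ℝ) + 1) * D := by
    have h2 : Nat.doubleFactorial (p - 1 + 2)
        = (p - 1 + 2) * Nat.doubleFactorial (p - 1) := Nat.doubleFactorial_add_two _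
    rw [hp1] at h2
    rw [h2]
    push_cast
    ring
  set a : ℝ := ε * σ ^ p * D with hadef
  have ha0 : 0 < a := by positivity
  have ha1 : a < 1 := by
    have : ε * σ ^ p * D = ε * D * σ ^ p := by ring
    rw [hadef, this]; exact hsmall
  have h1a : 0 < 1 - a := by linarith
  have hsq : (0:ℝ) < Real.sqrt (2 * Real.pi) * σ := by
    have : 0 < Real.sqrt (2 * Real.pi) := Real.sqrt_pos.mpr (by positivity)
    positivity
  have hlogmul : Real.log (Real.sqrt (2 * Real.pi) * σ * (1 - a))
      = Real.log (Real.sqrt (2 * Real.pi) * σ) + Real.log (1 - a) :=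
    Real.log_mul (ne_of_gt hsq) (ne_of_gt h1a)
  have hlogneg : Real.log (1 - a) < 0 :=
    Real.log_neg h1a (by linarith)
  have hrest : ε * σ ^ p * (D - (1 / 2) * (Nat.doubleFactorial (p + 1) : ℝ))
      = a * (1 - ((p : ℝ) + 1) / 2) := by
    rw [hDp1, hadef]; ring
  have hpR : (2 : ℝ) ≤ (p : ℝ) := by exact_mod_cast hp
  have hinv : (1 - a) * (1 - a)⁻¹ = 1 := mul_inv_cancel₀ (ne_of_gt h1a)
  have hinvpos : 0 < (1 - a)⁻¹ := inv_pos.mpr h1a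
  have hfrac : (1 - a)⁻¹ * (1 / 2 + a * (1 - ((p : ℝ) + 1) / 2)) ≤ 1 / 2 := by
    nlinarith [mul_nonneg ha0.le (sub_nonneg.mpr hpR)]
  rw [hH₁, hrest, hlogmul]
  linarith
end

section
/- (Skewness increases the second-order entropy approximation, q = 3, p = 4) Let σ > 0 and let ε₄ ≥ 0 satisfy 3 ε₄ σ⁴ ≤ 1/2. Define, for s ≥ 0 (where s plays the role of ε₃² σ⁶), D(s) = 1 − 3 ε₄ σ⁴ + 7.5 s + 52.5 ε₄² σ⁸ and N(s) = 0.5 − 4.5 ε₄ σ⁴ + 37.5 s + 367.5 ε₄² σ⁸, and let H₂(s) = log(√(2π) σ · D(s)) + N(s)/D(s). Then D(s) > 0 for all s ≥ 0 and H₂ is strictly increasing on [0, ∞). Hence at second order the skewness parameter ε₃ increases the entropy approximation of the density p(x) ∝ exp(−x²/(2σ²) + ε₃ x³ − ε₄ x⁴). -/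
open Real

theorem stmt18 (σ : ℝ) (hσ : 0 < σ)
    (ε₄ : ℝ) (hε₄ : 0 ≤ ε₄) (h : 3 * ε₄ * σ ^ 4 ≤ 1 / 2)
    (D N H₂ : ℝ → ℝ)
    (hD : ∀ s : ℝ, D s = 1 - 3 * ε₄ * σ ^ 4 + 7.5 * s + 52.5 * ε₄ ^ 2 * σ ^ 8)
    (hN : ∀ s : ℝ, N s = 0.5 - 4.5 * ε₄ * σ ^ 4 + 37.5 * s + 367.5 * ε₄ ^ 2 * σ ^ 8)
    (hH₂ : ∀ s : ℝ, H₂ s = Real.log (Real.sqrt (2 * Real.pi) * σ * D s) + N s / D s) :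
    (∀ s : ℝ, 0 ≤ s → 0 < D s) ∧ StrictMonoOn H₂ (Set.Ici (0 : ℝ)) := by
  have hq : (0:ℝ) ≤ ε₄ ^ 2 * σ ^ 8 := by positivity
  have hDpos : ∀ s : ℝ, 0 ≤ s → 0 < D s := by
    intro s hs
    rw [hD]; nlinarith
  have hc : 0 < Real.sqrt (2 * Real.pi) * σ := by
    have h2π : (0:ℝ) < 2 * Real.pi := by positivity
    exact mul_pos (Real.sqrt_pos.mpr h2π) hσ
  set c := Real.sqrt (2 * Real.pi) * σ with hcdef
  have hfun : H₂ = fun s => Real.log (c * (1 - 3 * ε₄ * σ ^ 4 + 7.5 * s + 52.5 * ε₄ ^ 2 * σ ^ 8))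
      + (0.5 - 4.5 * ε₄ * σ ^ 4 + 37.5 * s + 367.5 * ε₄ ^ 2 * σ ^ 8)
        / (1 - 3 * ε₄ * σ ^ 4 + 7.5 * s + 52.5 * ε₄ ^ 2 * σ ^ 8) := by
    funext s; rw [hH₂, hD, hN]
  refine ⟨hDpos, ?_⟩
  have hDpos' : ∀ s : ℝ, 0 ≤ s →
      0 < 1 - 3 * ε₄ * σ ^ 4 + 7.5 * s + 52.5 * ε₄ ^ 2 * σ ^ 8 := by
    intro s hs; have := hDpos s hs; rwa [hD] at this
  apply strictMonoOn_of_deriv_pos (convex_Ici 0)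
  · rw [hfun]
    apply ContinuousOn.add
    · apply ContinuousOn.log
      · fun_prop
      · intro x hx
        exact ne_of_gt (mul_pos hc (hDpos' x hx))
    · apply ContinuousOn.div
      · fun_prop
      · fun_prop
      · intro x hx; exact ne_of_gt (hDpos' x hx)
  · intro x hx
    rw [interior_Ici] at hx
    have hxpos : (0:ℝ) < x := hx
    set Dx := 1 - 3 * ε₄ * σ ^ 4 + 7.5 * x + 52.5 * ε₄ ^ 2 * σ ^ 8 with hDx
    set Nx := 0.5 - 4.5 * ε₄ * σ ^ 4 + 37.5 * x + 367.5 * ε₄ ^ 2 * σ ^ 8 with hNx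
    have hDxpos : 0 < Dx := hDpos' x hxpos.le
    have hDxne : Dx ≠ 0 := ne_of_gt hDxpos
    have hd1 : HasDerivAt (fun s : ℝ => 1 - 3 * ε₄ * σ ^ 4 + 7.5 * s + 52.5 * ε₄ ^ 2 * σ ^ 8)
        7.5 x := by
      have := ((hasDerivAt_id x).const_mul (7.5:ℝ)).const_add
        (1 - 3 * ε₄ * σ ^ 4) |>.add_const (52.5 * ε₄ ^ 2 * σ ^ 8)
      simpa using this
    have hn1 : HasDerivAt (fun s : ℝ => 0.5 - 4.5 * ε₄ * σ ^ 4 + 37.5 * s + 367.5 * ε₄ ^ 2 * σ ^ 8)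
        37.5 x := by
      have := ((hasDerivAt_id x).const_mul (37.5:ℝ)).const_add
        (0.5 - 4.5 * ε₄ * σ ^ 4) |>.add_const (367.5 * ε₄ ^ 2 * σ ^ 8)
      simpa using this
    have hlog : HasDerivAt (fun s : ℝ =>
        Real.log (c * (1 - 3 * ε₄ * σ ^ 4 + 7.5 * s + 52.5 * ε₄ ^ 2 * σ ^ 8)))
        ((c * 7.5) / (c * Dx)) x := by
      exact (hd1.const_mul c).log (ne_of_gt (mul_pos hc hDxpos))
    have hdiv : HasDerivAt (fun s : ℝ =>
        (0.5 - 4.5 * ε₄ * σ ^ 4 + 37.5 * s + 367.5 * ε₄ ^ 2 * σ ^ 8)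
          / (1 - 3 * ε₄ * σ ^ 4 + 7.5 * s + 52.5 * ε₄ ^ 2 * σ ^ 8))
        ((37.5 * Dx - Nx * 7.5) / Dx ^ 2) x := hn1.div hd1 hDxne
    have hH : HasDerivAt H₂ ((c * 7.5) / (c * Dx) + (37.5 * Dx - Nx * 7.5) / Dx ^ 2) x := by
      rw [hfun]; exact hlog.add hdiv
    rw [hH.deriv]
    have heq : (c * 7.5) / (c * Dx) + (37.5 * Dx - Nx * 7.5) / Dx ^ 2
        = (45 * Dx - 7.5 * Nx) / Dx ^ 2 := by
      field_simp
      ring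
    rw [heq]
    apply div_pos _ (by positivity)
    rw [hDx, hNx]
    nlinarith [mul_nonneg (mul_nonneg hε₄ (pow_pos hσ 4).le) (sub_nonneg.mpr h)]
end
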